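/- arXiv:0806.2548 — 5 statements merged into one kernel-verified Lean document; each statement's English description precedes it below -/
import Mathlib

section
/- The interval Newton step is complete: if 𝐠 is an interval extension of a differentiable real function g, 𝐠' is an interval extension of g' containing no zero (i.e., 0 ∉ 𝐠'(I)), c ∈ I, and r ∈ I with g(r) = 0, then r ∈ I ∩ (c − 𝐠([c,c]) / 𝐠'(I)). -/
/-- Completeness of the interval Newton step: every zero `r ∈ I` of `g` lies in
`I ∩ (c − 𝐠([c,c]) / 𝐠'(I))`, where the operations are setwise. -/
theorem newton_step_complete (l r : ℝ) (hlr : l ≤ r)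
    (g g' : ℝ → ℝ)
    (hdiff : ∀ x ∈ Set.Icc l r, HasDerivAt g (g' x) x)
    (G G' : Set ℝ → Set ℝ)
    (hG : ∀ (J : Set ℝ) (x : ℝ), x ∈ J → g x ∈ G J)
    (hG' : ∀ (J : Set ℝ) (x : ℝ), x ∈ J → g' x ∈ G' J)
    (h0 : (0:ℝ) ∉ G' (Set.Icc l r))
    (c : ℝ) (hc : c ∈ Set.Icc l r)
    (z : ℝ) (hz : z ∈ Set.Icc l r) (hgz : g z = 0) :
    z ∈ Set.Icc l r ∩
      {y : ℝ | ∃ u ∈ G (Set.Icc c c), ∃ v ∈ G' (Set.Icc l r), y = c - u / v} := by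
  refine ⟨hz, ?_⟩
  have hcc : c ∈ Set.Icc c c := Set.mem_Icc.2 ⟨le_refl c, le_refl c⟩
  rcases eq_or_ne z c with hzc | hzc
  · refine ⟨g c, hG _ c hcc, g' c, hG' _ c hc, ?_⟩
    rw [← hzc, hgz, zero_div, sub_zero]
  -- MVT on the interval between z and c
  have key : ∀ a b : ℝ, a < b → a ∈ Set.Icc l r → b ∈ Set.Icc l r →
      ∃ ξ ∈ Set.Icc l r, g b - g a = g' ξ * (b - a) := by
    intro a b hab ha hb
    have hsub : Set.Icc a b ⊆ Set.Icc l r :=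
      Set.Icc_subset_Icc ha.1 hb.2
    have hcont : ContinuousOn g (Set.Icc a b) := fun x hx =>
      ((hdiff x (hsub hx)).continuousAt).continuousWithinAt
    have hderiv : ∀ x ∈ Set.Ioo a b, HasDerivAt g (g' x) x := fun x hx =>
      hdiff x (hsub (Set.mem_Icc_of_Ioo hx))
    obtain ⟨ξ, hξ, hξeq⟩ := exists_hasDerivAt_eq_slope g g' hab hcont hderiv
    refine ⟨ξ, hsub (Set.mem_Icc_of_Ioo hξ), ?_⟩
    rw [hξeq, div_mul_cancel₀ _ (sub_ne_zero.2 hab.ne')]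
  have main : ∃ ξ ∈ Set.Icc l r, g c = g' ξ * (c - z) := by
    rcases lt_or_gt_of_ne hzc with h | h
    · obtain ⟨ξ, hξ, heq⟩ := key z c h hz hc
      exact ⟨ξ, hξ, by linarith [heq, hgz]⟩
    · obtain ⟨ξ, hξ, heq⟩ := key c z h hc hz
      refine ⟨ξ, hξ, ?_⟩
      have : g z - g c = g' ξ * (z - c) := heq
      rw [hgz] at this
      linarith [this]
  obtain ⟨ξ, hξ, heq⟩ := main
  have hv : g' ξ ∈ G' (Set.Icc l r) := hG' _ ξ hξ
  have hvne : g' ξ ≠ 0 := fun h => h0 (h ▸ hv)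
  refine ⟨g c, hG _ c hcc, g' ξ, hv, ?_⟩
  rw [heq]
  field_simp
  ring
end

section
/- If 0 ∉ 𝐠'(I) and the interval Newton step N(I, c) = I ∩ (c − 𝐠([c,c]) / 𝐠'(I)) is empty for some c ∈ I, then g has no zero in I. -/
/-- If `0 ∉ 𝐠'(I)` and the Newton step `I ∩ (c − 𝐠([c,c])/𝐠'(I))` is empty for
some `c ∈ I`, then `g` has no zero in `I`. -/
theorem newton_step_empty_no_zero (l r : ℝ) (hlr : l ≤ r)
    (g g' : ℝ → ℝ)
    (hdiff : ∀ x ∈ Set.Icc l r, HasDerivAt g (g' x) x)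
    (G G' : Set ℝ → Set ℝ)
    (hG : ∀ (J : Set ℝ) (x : ℝ), x ∈ J → g x ∈ G J)
    (hG' : ∀ (J : Set ℝ) (x : ℝ), x ∈ J → g' x ∈ G' J)
    (h0 : (0:ℝ) ∉ G' (Set.Icc l r))
    (c : ℝ) (hc : c ∈ Set.Icc l r)
    (hempty : Set.Icc l r ∩
      {y : ℝ | ∃ u ∈ G (Set.Icc c c), ∃ v ∈ G' (Set.Icc l r), y = c - u / v} = ∅) :
    ∀ x ∈ Set.Icc l r, g x ≠ 0 := by
  intro x hx hgx
  have hmem : x ∈ Set.Icc l r ∩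
      {y : ℝ | ∃ u ∈ G (Set.Icc c c), ∃ v ∈ G' (Set.Icc l r), y = c - u / v} := by
    refine ⟨hx, ?_⟩
    have hgc : g c ∈ G (Set.Icc c c) := hG _ c ⟨le_refl c, le_refl c⟩
    rcases eq_or_ne x c with rfl | hne
    · exact ⟨g x, hgc, g' x, hG' _ x hx, by simp [hgx]⟩
    · -- MVT between x and c
      have key : ∃ ξ ∈ Set.Icc l r, g' ξ ≠ 0 ∧ g' ξ * (c - x) = g c := by
        rcases lt_or_gt_of_ne hne with h | h
        · obtain ⟨ξ, hξ, hξ'⟩ := exists_hasDerivAt_eq_slope g g' h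
            (ContinuousOn.mono (fun y hy => (hdiff y hy).continuousAt.continuousWithinAt)
              (Set.Icc_subset_Icc hx.1 hc.2))
            (fun y hy => hdiff y ⟨le_trans hx.1 (le_of_lt hy.1),
              le_trans (le_of_lt hy.2) hc.2⟩)
          have hξI : ξ ∈ Set.Icc l r := ⟨le_trans hx.1 (le_of_lt hξ.1),
            le_trans (le_of_lt hξ.2) hc.2⟩
          refine ⟨ξ, hξI, fun h0' => h0 (h0' ▸ hG' _ ξ hξI), ?_⟩
          rw [hξ']
          field_simp [hgx, sub_ne_zero.mpr (ne_of_gt h)]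
          simp [hgx]
        · obtain ⟨ξ, hξ, hξ'⟩ := exists_hasDerivAt_eq_slope g g' h
            (ContinuousOn.mono (fun y hy => (hdiff y hy).continuousAt.continuousWithinAt)
              (Set.Icc_subset_Icc hc.1 hx.2))
            (fun y hy => hdiff y ⟨le_trans hc.1 (le_of_lt hy.1),
              le_trans (le_of_lt hy.2) hx.2⟩)
          have hξI : ξ ∈ Set.Icc l r := ⟨le_trans hc.1 (le_of_lt hξ.1),
            le_trans (le_of_lt hξ.2) hx.2⟩
          refine ⟨ξ, hξI, fun h0' => h0 (h0' ▸ hG' _ ξ hξI), ?_⟩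
          rw [hξ']
          field_simp [hgx, sub_ne_zero.mpr (ne_of_gt h)]
          rw [hgx]
          ring
      obtain ⟨ξ, hξI, hξ0, hξeq⟩ := key
      refine ⟨g c, hgc, g' ξ, hG' _ ξ hξI, ?_⟩
      rw [← hξeq, mul_comm, mul_div_assoc, div_self hξ0, mul_one]
      ring
  rw [hempty] at hmem
  exact hmem
end

section
/- Existence and uniqueness of the box-consistent tightening: given an interval extension 𝐠 and a floating-point interval I, there is a unique largest (with respect to set inclusion) floating-point interval J ⊆ I such that J = ∅ or J is box consistent with respect to 𝐠, provided 𝐠 is inclusion-monotone. -/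
noncomputable def nextF (F : Finset ℝ) (a : ℝ) : ℝ := sInf {x : ℝ | x ∈ F ∧ a < x}
noncomputable def prevF (F : Finset ℝ) (v : ℝ) : ℝ := sSup {x : ℝ | x ∈ F ∧ x < v}

def BoxConsistent (F : Finset ℝ) (G : Set ℝ → Set ℝ) (u v : ℝ) : Prop :=
  (0:ℝ) ∈ G (Set.Icc u (nextF F u)) ∧ (0:ℝ) ∈ G (Set.Icc (prevF F v) v)

/-- Existence and uniqueness of the largest box-consistent (or empty)
floating-point subinterval of `I`, for an inclusion-monotone extension `𝐠`. -/
theorem largest_box_consistent_exists_unique (F : Finset ℝ) (G : Set ℝ → Set ℝ)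
    (hmono : ∀ A B : Set ℝ, A ⊆ B → G A ⊆ G B)
    (a b : ℝ) (ha : a ∈ F) (hb : b ∈ F) (hab : a ≤ b) :
    ∃! J : Set ℝ,
      (J ⊆ Set.Icc a b) ∧
      (J = ∅ ∨ ∃ u ∈ F, ∃ v ∈ F, u ≤ v ∧ J = Set.Icc u v ∧ BoxConsistent F G u v) ∧
      (∀ J' : Set ℝ, J' ⊆ Set.Icc a b →
        (J' = ∅ ∨ ∃ u ∈ F, ∃ v ∈ F, u ≤ v ∧ J' = Set.Icc u v ∧ BoxConsistent F G u v) →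
        J' ⊆ J) := by
  classical
  have key : ∃ J : Set ℝ,
      (J ⊆ Set.Icc a b) ∧
      (J = ∅ ∨ ∃ u ∈ F, ∃ v ∈ F, u ≤ v ∧ J = Set.Icc u v ∧ BoxConsistent F G u v) ∧
      (∀ J' : Set ℝ, J' ⊆ Set.Icc a b →
        (J' = ∅ ∨ ∃ u ∈ F, ∃ v ∈ F, u ≤ v ∧ J' = Set.Icc u v ∧ BoxConsistent F G u v) →
        J' ⊆ J) := by
    by_cases hT : ∃ u ∈ F, ∃ v ∈ F, a ≤ u ∧ u ≤ v ∧ v ≤ b ∧ BoxConsistent F G u v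
    · obtain ⟨u0, hu0, v0, hv0, hau0, hu0v0, hv0b, hbc0⟩ := hT
      set SL := F.filter (fun u => a ≤ u ∧ u ≤ b ∧ (0:ℝ) ∈ G (Set.Icc u (nextF F u))) with hSL
      set SR := F.filter (fun v => a ≤ v ∧ v ≤ b ∧ (0:ℝ) ∈ G (Set.Icc (prevF F v) v)) with hSR
      have hu0SL : u0 ∈ SL := by
        rw [hSL, Finset.mem_filter]
        exact ⟨hu0, hau0, le_trans hu0v0 hv0b, hbc0.1⟩
      have hv0SR : v0 ∈ SR := by
        rw [hSR, Finset.mem_filter]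
        exact ⟨hv0, le_trans hau0 hu0v0, hv0b, hbc0.2⟩
      have hSLne : SL.Nonempty := ⟨u0, hu0SL⟩
      have hSRne : SR.Nonempty := ⟨v0, hv0SR⟩
      set us := SL.min' hSLne with hus
      set vs := SR.max' hSRne with hvs
      have husSL : us ∈ SL := SL.min'_mem hSLne
      have hvsSR : vs ∈ SR := SR.max'_mem hSRne
      rw [hSL, Finset.mem_filter] at husSL
      rw [hSR, Finset.mem_filter] at hvsSR
      have husv : us ≤ vs :=
        le_trans (SL.min'_le u0 hu0SL) (le_trans hu0v0 (SR.le_max' v0 hv0SR))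
      refine ⟨Set.Icc us vs, Set.Icc_subset_Icc husSL.2.1 hvsSR.2.2.1,
        Or.inr ⟨us, husSL.1, vs, hvsSR.1, husv, rfl, husSL.2.2.2, hvsSR.2.2.2⟩, ?_⟩
      intro J' hJ'sub hJ'
      rcases hJ' with rfl | ⟨u, hu, v, hv, huv, rfl, hbc⟩
      · simp
      · have hau : a ≤ u := (hJ'sub (Set.left_mem_Icc.2 huv)).1
        have hvb : v ≤ b := (hJ'sub (Set.right_mem_Icc.2 huv)).2
        have huSL : u ∈ SL := by
          rw [hSL, Finset.mem_filter]
          exact ⟨hu, hau, le_trans huv hvb, hbc.1⟩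
        have hvSR : v ∈ SR := by
          rw [hSR, Finset.mem_filter]
          exact ⟨hv, le_trans hau huv, hvb, hbc.2⟩
        exact Set.Icc_subset_Icc (SL.min'_le u huSL) (SR.le_max' v hvSR)
    · refine ⟨∅, by simp, Or.inl rfl, ?_⟩
      intro J' hJ'sub hJ'
      rcases hJ' with rfl | ⟨u, hu, v, hv, huv, rfl, hbc⟩
      · simp
      · exfalso
        have hau : a ≤ u := (hJ'sub (Set.left_mem_Icc.2 huv)).1
        have hvb : v ≤ b := (hJ'sub (Set.right_mem_Icc.2 huv)).2
        exact hT ⟨u, hu, v, hv, hau, huv, hvb, hbc⟩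
  obtain ⟨J, hJ⟩ := key
  exact ⟨J, hJ, fun y hy =>
    Set.Subset.antisymm (hJ.2.2 y hy.1 hy.2.1) (hy.2.2 J hJ.1 hJ.2.1)⟩
end

section
/- Completeness of the sbc iteration step: let I be a floating-point interval, split it at a midpoint m into I_l = [lb I, m] and I_r = [m, rb I]. Suppose each half is either (a) kept, (b) replaced by its Newton-step contraction, or (c) replaced by ∅ only when 0 ∉ 𝐠 applied to it. Then every zero r ∈ I of g (with 𝐠, 𝐠' containment-correct extensions of g, g') lies in Hull(I_l' ∪ I_r') where I_l', I_r' are the resulting halves. -/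
/-- Interval hull of a set of reals. -/
noncomputable def hull (S : Set ℝ) : Set ℝ := Set.Icc (sInf S) (sSup S)

/-- Completeness of the sbc iteration step: splitting `I` at `m`, if each half
is kept, replaced by a zero-preserving (Newton-step) contraction of itself, or
replaced by `∅` only when `0 ∉ 𝐠` of it, then every zero of `g` in `I` lies in
the hull of the two resulting halves. -/
theorem sbc_step_complete (g : ℝ → ℝ) (G : Set ℝ → Set ℝ)
    (hG : ∀ (J : Set ℝ) (x : ℝ), x ∈ J → g x ∈ G J)
    (a b m : ℝ) (hab : a ≤ b) (hm : m ∈ Set.Icc a b)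
    (Il' Ir' : Set ℝ)
    (hIl'sub : Il' ⊆ Set.Icc a m) (hIr'sub : Ir' ⊆ Set.Icc m b)
    (hl : Il' = Set.Icc a m ∨
          (∀ x ∈ Set.Icc a m, g x = 0 → x ∈ Il') ∨
          (Il' = ∅ ∧ (0:ℝ) ∉ G (Set.Icc a m)))
    (hr : Ir' = Set.Icc m b ∨
          (∀ x ∈ Set.Icc m b, g x = 0 → x ∈ Ir') ∨
          (Ir' = ∅ ∧ (0:ℝ) ∉ G (Set.Icc m b))) :
    ∀ z ∈ Set.Icc a b, g z = 0 → z ∈ hull (Il' ∪ Ir') := by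
  intro z hz hgz
  -- z is in the union
  have hmem : z ∈ Il' ∪ Ir' := by
    rcases le_or_gt z m with hzm | hzm
    · have hz' : z ∈ Set.Icc a m := ⟨hz.1, hzm⟩
      left
      rcases hl with h | h | ⟨_, h0⟩
      · rw [h]; exact hz'
      · exact h z hz' hgz
      · exact absurd (hgz ▸ hG _ z hz') h0
    · have hz' : z ∈ Set.Icc m b := ⟨hzm.le, hz.2⟩
      right
      rcases hr with h | h | ⟨_, h0⟩
      · rw [h]; exact hz'
      · exact h z hz' hgz
      · exact absurd (hgz ▸ hG _ z hz') h0
  have hsub : Il' ∪ Ir' ⊆ Set.Icc a b := by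
    intro x hx
    rcases hx with hx | hx
    · exact ⟨(hIl'sub hx).1, le_trans (hIl'sub hx).2 hm.2⟩
    · exact ⟨le_trans hm.1 (hIr'sub hx).1, (hIr'sub hx).2⟩
  have hbdd : BddBelow (Il' ∪ Ir') := ⟨a, fun x hx => (hsub hx).1⟩
  have hbdd' : BddAbove (Il' ∪ Ir') := ⟨b, fun x hx => (hsub hx).2⟩
  exact ⟨csInf_le hbdd hmem, le_csSup hbdd' hmem⟩
end

section
/- Reusing a wider numerator preserves Newton-step completeness: if 0 ∉ 𝐠'(J), c = lb J, and C = [c, next(c)] ⊆ J, then every zero r ∈ J of g satisfies r ∈ J ∩ (C − 𝐠(C)/𝐠'(J)), where the subtraction of an interval from an interval and the division are setwise interval operations. -/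
/-- Reusing a wider numerator preserves Newton-step completeness: with
`C = [c, next c] ⊆ J` and `0 ∉ 𝐠'(J)`, every zero `r ∈ J` of `g` satisfies
`r ∈ J ∩ (C − 𝐠(C)/𝐠'(J))` (setwise operations). -/
theorem newton_wider_numerator_complete (a b c' : ℝ) (hab : a ≤ b)
    (hac' : a ≤ c') (hc'b : c' ≤ b)
    (g g' : ℝ → ℝ)
    (hdiff : ∀ x ∈ Set.Icc a b, HasDerivAt g (g' x) x)
    (G G' : Set ℝ → Set ℝ)
    (hG : ∀ (J : Set ℝ) (x : ℝ), x ∈ J → g x ∈ G J)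
    (hG' : ∀ (J : Set ℝ) (x : ℝ), x ∈ J → g' x ∈ G' J)
    (h0 : (0:ℝ) ∉ G' (Set.Icc a b))
    (z : ℝ) (hz : z ∈ Set.Icc a b) (hgz : g z = 0) :
    z ∈ Set.Icc a b ∩
      {y : ℝ | ∃ p ∈ Set.Icc a c', ∃ u ∈ G (Set.Icc a c'),
        ∃ v ∈ G' (Set.Icc a b), y = p - u / v} := by
  have haC : a ∈ Set.Icc a c' := ⟨le_refl a, hac'⟩
  have hgaC : g a ∈ G (Set.Icc a c') := hG _ a haC
  refine ⟨hz, ?_⟩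
  rcases eq_or_lt_of_le hz.1 with h | h
  · -- z = a
    refine ⟨a, haC, g a, hgaC, g' a, hG' _ a ⟨le_refl a, hab⟩, ?_⟩
    rw [← h] at hgz ⊢
    simp [hgz]
  · -- a < z, use MVT on [a, z]
    have hsub : Set.Icc a z ⊆ Set.Icc a b := Set.Icc_subset_Icc le_rfl hz.2
    have hcont : ContinuousOn g (Set.Icc a z) := fun x hx =>
      ((hdiff x (hsub hx)).continuousAt).continuousWithinAt
    have hder : ∀ x ∈ Set.Ioo a z, HasDerivAt g (g' x) x := fun x hx =>
      hdiff x (hsub ⟨le_of_lt hx.1, le_of_lt hx.2⟩)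
    obtain ⟨ξ, hξ, hslope⟩ := exists_hasDerivAt_eq_slope g g' h hcont hder
    have hξab : ξ ∈ Set.Icc a b := hsub ⟨le_of_lt hξ.1, le_of_lt hξ.2⟩
    have hvmem : g' ξ ∈ G' (Set.Icc a b) := hG' _ ξ hξab
    have hv0 : g' ξ ≠ 0 := fun h' => h0 (h' ▸ hvmem)
    refine ⟨a, haC, g a, hgaC, g' ξ, hvmem, ?_⟩
    rw [hgz, zero_sub] at hslope
    have hz0 : z - a ≠ 0 := sub_ne_zero.mpr (ne_of_gt h)
    have hga : g a ≠ 0 := by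
      intro h'
      apply hv0
      rw [hslope, h']
      simp
    rw [hslope, div_div_eq_mul_div, mul_comm, mul_div_assoc, div_neg,
      div_self hga, mul_neg, mul_one, sub_neg_eq_add]
    ring
end
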